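/- (Sakugawa–Seki, first identity) For s = (s_1,...,s_d) positive integers, w = s_1+...+s_d, l(i) = s_1+...+s_i, variables t_1,...,t_d, and n ≥ 1: ∑_{n ≥ n_1 ≥ ... ≥ n_d ≥ 1} (-1)^{n_1} C(n,n_1) t_1^{n_1-n_2} ··· t_{d-1}^{n_{d-1}-n_d} t_d^{n_d} / (n_1^{s_1} ··· n_d^{s_d}) = ∑_{n ≥ n_1 ≥ ... ≥ n_w ≥ 1} (1-t_1)^{n_{l(1)}-n_{l(1)+1}} ··· (1-t_{d-1})^{n_{l(d-1)}-n_{l(d-1)+1}} ((1-t_d)^{n_{l(d)}} - 1) / (n_1 ··· n_w). -/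

import Mathlib

/-- Weakly decreasing chains `hi ≥ f 0 ≥ f 1 ≥ ⋯ ≥ f (d-1) ≥ lo`. -/
def chainsIcc (d lo hi : ℕ) : Finset (Fin d → ℕ) :=
  (Fintype.piFinset fun _ : Fin d => Finset.Icc lo hi).filter
    fun f => ∀ i j : Fin d, i ≤ j → f j ≤ f i

/-- `idx f j` is the paper's `n_j` (1-indexed entry of the chain `f`). -/
def idx {w : ℕ} (f : Fin w → ℕ) (j : ℕ) : ℕ :=
  if h : j - 1 < w then f ⟨j - 1, h⟩ else 0

def lsum (s : ℕ → ℕ) (i : ℕ) : ℕ := ∑ j ∈ Finset.range i, s j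

/-!
Write `D a k = a k / k` (`divByIndex`), `T_x a k = ∑_{1 ≤ m ≤ k} x ^ (k - m) a m` (`geomConv x`)
and `B a n = ∑_{1 ≤ k ≤ n} (-1) ^ k C(n, k) a k` (`binomialTransform`). The left side is
`B (D^{s_1} T_{t_1} D^{s_2} ⋯ T_{t_{d-1}} D^{s_d} (k ↦ t_d ^ k)) n`, and the right side is the
`w`-fold composite of single steps `T_y D` (with `y = 1 - t_r` where block `r + 1` begins and
`y = 1` elsewhere) applied to `B (k ↦ t_d ^ k) = (1 - t_d) ^ n - 1`. Since `T_0 D = D`, the left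
operator is itself a composite of `w` single steps `T_x D`, and `B` moves through each of them by
`B ∘ T_x ∘ D = T_{1-x} ∘ D ∘ B`, a binomial-coefficient identity.
-/

open Finset

lemma mem_chainsIcc {d lo hi : ℕ} {f : Fin d → ℕ} :
    f ∈ chainsIcc d lo hi ↔ (∀ i, f i ∈ Icc lo hi) ∧ Antitone f := by
  simp [chainsIcc, Antitone]

lemma cons_mem_chainsIcc_succ {e lo hi k : ℕ} {g : Fin e → ℕ} :
    (Fin.cons k g : Fin (e + 1) → ℕ) ∈ chainsIcc (e + 1) lo hi ↔
      k ∈ Icc lo hi ∧ g ∈ chainsIcc e lo k := by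
  simp only [mem_chainsIcc, Antitone, Fin.forall_fin_succ, Fin.cons_zero, Fin.cons_succ,
    mem_Icc, Fin.succ_le_succ_iff, Fin.zero_le, Fin.le_zero_iff, Fin.succ_ne_zero, le_refl,
    false_implies, true_implies, true_and, forall_and, implies_true]
  constructor
  · rintro ⟨⟨⟨hlo, hglo⟩, hhi, -⟩, hle, hanti⟩
    exact ⟨⟨hlo, hhi⟩, ⟨hglo, hle⟩, hanti⟩
  · rintro ⟨⟨hlo, hhi⟩, ⟨hglo, hle⟩, hanti⟩
    exact ⟨⟨⟨hlo, hglo⟩, hhi, fun i => (hle i).trans hhi⟩, hle, hanti⟩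

lemma sum_chainsIcc_zero {M : Type*} [AddCommMonoid M] (lo hi : ℕ) (F : (Fin 0 → ℕ) → M) :
    ∑ f ∈ chainsIcc 0 lo hi, F f = F ![] := by
  rw [show chainsIcc 0 lo hi = {![]} by
    ext f; simp [mem_chainsIcc, Subsingleton.elim f ![], Subsingleton.antitone], sum_singleton]

lemma sum_chainsIcc_succ {M : Type*} [AddCommMonoid M] (e n : ℕ) (F : (Fin (e + 1) → ℕ) → M) :
    ∑ f ∈ chainsIcc (e + 1) 1 n, F f
      = ∑ k ∈ Icc 1 n, ∑ g ∈ chainsIcc e 1 k, F (Fin.cons k g) := by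
  rw [sum_sigma']
  refine sum_nbij' (fun f => ⟨f 0, Fin.tail f⟩) (fun p => Fin.cons p.1 p.2) ?_ ?_ ?_ ?_ ?_
  · intro f hf
    rw [← Fin.cons_self_tail f, cons_mem_chainsIcc_succ] at hf
    simpa using hf
  · rintro ⟨k, g⟩ hp
    simpa [cons_mem_chainsIcc_succ] using hp
  · intro f _; exact Fin.cons_self_tail f
  · rintro ⟨k, g⟩ _; simp
  · intro f _; rw [Fin.cons_self_tail]

lemma idx_cons_one {w : ℕ} (k : ℕ) (g : Fin w → ℕ) :
    idx (Fin.cons k g : Fin (w + 1) → ℕ) 1 = k := by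
  simp [idx]

lemma idx_cons_add_two {w : ℕ} (k : ℕ) (g : Fin w → ℕ) (j : ℕ) :
    idx (Fin.cons k g : Fin (w + 1) → ℕ) (j + 2) = idx g (j + 1) := by
  by_cases h : j < w
  · simp [idx, h, show j + 1 < w + 1 by omega]
    rfl
  · simp [idx, h, show ¬ j + 1 < w + 1 by omega]

lemma idx_cons_succ {w : ℕ} (k : ℕ) (g : Fin w → ℕ) {j : ℕ} (hj : j ≠ 0) :
    idx (Fin.cons k g : Fin (w + 1) → ℕ) (j + 1) = idx g j := by
  obtain ⟨i, rfl⟩ := Nat.exists_eq_succ_of_ne_zero hj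
  exact idx_cons_add_two k g i

lemma lsum_succ (σ : ℕ → ℕ) (r : ℕ) : lsum σ (r + 1) = σ 0 + lsum (fun i => σ (i + 1)) r := by
  rw [lsum, sum_range_succ', add_comm]; rfl

lemma lsum_lt_lsum {σ : ℕ → ℕ} {e r : ℕ} (hσ : ∀ i < e, 1 ≤ σ i) (hr : r < e) :
    lsum σ r < lsum σ e :=
  sum_lt_sum_of_subset (range_subset_range.2 hr.le) (mem_range.2 hr) (by simp)
    (hσ r hr) fun _ _ _ => Nat.zero_le _

section BinomialIdentity
variable {R : Type*} [CommRing R]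

lemma sum_Ioc_neg_one_pow_choose_mul_pow_succ (x : R) (p n : ℕ) :
    ∑ k ∈ Ioc p (n + 1), (-1) ^ k * ((n + 1).choose k : R) * x ^ (k - (p + 1)) =
      (1 - x) * ∑ k ∈ Ioc p n, (-1) ^ k * (n.choose k : R) * x ^ (k - (p + 1)) +
        (-1) ^ (p + 1) * n.choose p := by
  obtain hnp | hpn := lt_or_ge n p
  · rw [Ioc_eq_empty (by omega), Ioc_eq_empty (by omega), Nat.choose_eq_zero_of_lt hnp]
    simp
  have pascal : ∀ k ∈ Ioc p (n + 1), (-1) ^ k * ((n + 1).choose k : R) * x ^ (k - (p + 1)) =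
      (-1) ^ k * (n.choose k : R) * x ^ (k - (p + 1)) +
        (-1) ^ k * (n.choose (k - 1) : R) * x ^ (k - (p + 1)) := fun k hk => by
    rw [Nat.choose_succ_left n k (Nat.zero_lt_of_lt (mem_Ioc.1 hk).1)]
    push_cast
    ring
  have top : ∑ k ∈ Ioc p (n + 1), (-1) ^ k * (n.choose k : R) * x ^ (k - (p + 1)) =
      ∑ k ∈ Ioc p n, (-1) ^ k * (n.choose k : R) * x ^ (k - (p + 1)) := by
    simp [sum_Ioc_succ_top hpn]
  have shifted : ∑ k ∈ Ioc p (n + 1), (-1) ^ k * (n.choose (k - 1) : R) * x ^ (k - (p + 1)) =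
      (-1) ^ (p + 1) * n.choose p -
        x * ∑ k ∈ Ioc p n, (-1) ^ k * (n.choose k : R) * x ^ (k - (p + 1)) := by
    rw [← Ico_add_one_add_one_eq_Ioc, ← sum_Ico_add', Ico_add_one_right_eq_Icc,
      ← Ioc_insert_left hpn, sum_insert left_notMem_Ioc, mul_sum, sub_eq_add_neg,
      ← sum_neg_distrib, Nat.add_sub_cancel, Nat.sub_self, pow_zero, mul_one]
    congr 1
    refine sum_congr rfl fun k hk => ?_
    have hpk := (mem_Ioc.1 hk).1
    rw [Nat.add_sub_cancel, show k + 1 - (p + 1) = k - (p + 1) + 1 by omega]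
    ring
  rw [sum_congr rfl pascal, sum_add_distrib, top, shifted]
  ring

lemma sum_Ioc_choose_pred_mul_pow_succ (x : R) (p n : ℕ) :
    ∑ j ∈ Ioc p (n + 1), ((j - 1).choose p : R) * (1 - x) ^ (n + 1 - j) =
      (1 - x) * ∑ j ∈ Ioc p n, ((j - 1).choose p : R) * (1 - x) ^ (n - j) + n.choose p := by
  rcases le_or_gt p n with hpn | hnp
  · rw [sum_Ioc_succ_top hpn, mul_sum, Nat.add_sub_cancel, Nat.sub_self, pow_zero, mul_one]
    congr 1
    refine sum_congr rfl fun j hj => ?_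
    rw [Nat.succ_sub (mem_Ioc.1 hj).2, pow_succ]
    ring
  · rw [Ioc_eq_empty (by omega), Ioc_eq_empty (by omega), Nat.choose_eq_zero_of_lt hnp]
    simp

theorem sum_Ioc_neg_one_pow_choose_mul_pow (x : R) (p n : ℕ) :
    ∑ k ∈ Ioc p n, (-1) ^ k * (n.choose k : R) * x ^ (k - (p + 1)) =
      (-1) ^ (p + 1) * ∑ j ∈ Ioc p n, ((j - 1).choose p : R) * (1 - x) ^ (n - j) := by
  induction n with
  | zero => simp
  | succ n ih =>
    rw [sum_Ioc_neg_one_pow_choose_mul_pow_succ, ih, sum_Ioc_choose_pred_mul_pow_succ]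
    ring

end BinomialIdentity

lemma inv_mul_choose_succ_eq {j : ℕ} (p : ℕ) (hj : 1 ≤ j) :
    (j : ℚ)⁻¹ * j.choose (p + 1) = ((p + 1 : ℕ) : ℚ)⁻¹ * (j - 1).choose p := by
  obtain ⟨i, rfl⟩ := Nat.exists_eq_add_of_le' hj
  rw [Nat.add_sub_cancel]
  field_simp
  exact_mod_cast (Nat.add_one_mul_choose_eq i p).symm

lemma sum_Icc_sum_Icc_comm {M : Type*} [AddCommMonoid M] (n : ℕ) (f : ℕ → ℕ → M) :
    ∑ k ∈ Icc 1 n, ∑ m ∈ Icc 1 k, f k m = ∑ m ∈ Icc 1 n, ∑ k ∈ Icc m n, f k m :=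
  sum_comm' fun k m => by simp only [mem_Icc]; omega

section Operators
variable {A : Type*} [CommRing A]

def geomConv (x : A) (a : ℕ → A) (k : ℕ) : A := ∑ m ∈ Icc 1 k, x ^ (k - m) * a m

lemma geomConv_zero_of_apply_zero {a : ℕ → A} (ha : a 0 = 0) : geomConv 0 a = a := by
  funext k
  rcases Nat.eq_zero_or_pos k with rfl | hk
  · simp [geomConv, ha]
  rw [geomConv, sum_eq_single_of_mem k (by simp; omega) fun m hm hmk => by
    rw [zero_pow (by simp at hm; omega), zero_mul]]
  simp

variable [Algebra ℚ A]

noncomputable def binomialTransform (a : ℕ → A) (n : ℕ) : A :=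
  ∑ k ∈ Icc 1 n, ((-1 : ℚ) ^ k * (n.choose k : ℚ)) • a k

noncomputable def divByIndex (a : ℕ → A) (k : ℕ) : A := (k : ℚ)⁻¹ • a k

theorem binomialTransform_geomConv_divByIndex (x : A) (a : ℕ → A) :
    binomialTransform (geomConv x (divByIndex a)) =
      geomConv (1 - x) (divByIndex (binomialTransform a)) := by
  funext n
  -- after exchanging the sums, both coefficients of `a m` are sides of
  -- `sum_Ioc_neg_one_pow_choose_mul_pow` (up to the factor `1 / m`)
  simp only [binomialTransform, geomConv, divByIndex, smul_sum, mul_sum]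
  rw [sum_Icc_sum_Icc_comm, sum_Icc_sum_Icc_comm]
  refine sum_congr rfl fun m hm => ?_
  obtain ⟨p, rfl⟩ := Nat.exists_eq_add_of_le' (mem_Icc.1 hm).1
  have key := sum_Ioc_neg_one_pow_choose_mul_pow x p n
  rw [Icc_add_one_left_eq_Ioc]
  simp only [Algebra.smul_def, map_mul, map_pow, map_neg, map_one, map_natCast] at key ⊢
  have coeff : ∀ j ∈ Ioc p n, algebraMap ℚ A (j : ℚ)⁻¹ * (j.choose (p + 1) : A) =
      algebraMap ℚ A ((p + 1 : ℕ) : ℚ)⁻¹ * ((j - 1).choose p : A) := fun j hj => by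
    simpa using
      congrArg (algebraMap ℚ A) (inv_mul_choose_succ_eq p (Nat.one_le_of_lt (mem_Ioc.1 hj).1))
  calc _ = (∑ k ∈ Ioc p n, (-1) ^ k * (n.choose k : A) * x ^ (k - (p + 1))) *
          (algebraMap ℚ A ((p + 1 : ℕ) : ℚ)⁻¹ * a (p + 1)) := by
        rw [sum_mul]
        exact sum_congr rfl fun k _ => by ring
    _ = _ := by
        rw [key, mul_sum, sum_mul]
        refine sum_congr rfl fun j hj => ?_
        linear_combination -(-1) ^ (p + 1) * (1 - x) ^ (n - j) * a (p + 1) * coeff j hj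

lemma divByIndex_iterate_apply (σ : ℕ) (a : ℕ → A) (k : ℕ) :
    divByIndex^[σ] a k = ((k : ℚ) ^ σ)⁻¹ • a k := by
  induction σ generalizing a with
  | zero => simp
  | succ σ ih => rw [Function.iterate_succ_apply, ih, divByIndex, smul_smul, pow_succ, mul_inv]

lemma binomialTransform_pow (x : A) :
    binomialTransform (fun k => x ^ k) = fun n => (1 - x) ^ n - 1 := by
  funext n
  have binom : (1 - x) ^ n = ∑ k ∈ range (n + 1), (-x) ^ k * (n.choose k : A) := by
    simpa [sub_eq_neg_add] using add_pow (-x) 1 n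
  rw [binom, range_eq_Ico, sum_eq_sum_Ico_succ_bot (Nat.succ_pos n), zero_add,
    Nat.succ_eq_add_one, Ico_add_one_right_eq_Icc, binomialTransform]
  simp only [pow_zero, Nat.choose_zero_right, Nat.cast_one, mul_one, add_sub_cancel_left]
  refine sum_congr rfl fun k _ => ?_
  simp only [Algebra.smul_def, map_mul, map_pow, map_neg, map_one, map_natCast, neg_pow x k]
  ring

end Operators

section NestedSum
variable {A : Type*} [CommRing A] [Algebra ℚ A]

noncomputable def nestedSum (σ : ℕ → ℕ) (τ : ℕ → A) : ℕ → (ℕ → A) → ℕ → A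
  | 0, b => b
  | e + 1, b =>
    geomConv (τ 0) (divByIndex^[σ 0] (nestedSum (fun j => σ (j + 1)) (fun j => τ (j + 1)) e b))

lemma nestedSum_add (σ : ℕ → ℕ) (τ : ℕ → A) (a e : ℕ) (b : ℕ → A) :
    nestedSum σ τ (a + e) b =
      nestedSum σ τ a (nestedSum (fun j => σ (a + j)) (fun j => τ (a + j)) e b) := by
  induction a generalizing σ τ with
  | zero => simp [nestedSum]
  | succ a ih =>
    rw [Nat.add_right_comm, nestedSum, ih, nestedSum]
    simp only [Nat.add_right_comm _ 1]

theorem nestedSum_eq_sum (σ : ℕ → ℕ) (τ : ℕ → A) (e : ℕ) (b : ℕ → A) (k : ℕ) :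
    nestedSum σ τ e b k =
      ∑ g ∈ chainsIcc e 1 k, (∏ j ∈ range e, (idx g (j + 1) : ℚ) ^ σ j)⁻¹ •
        ((∏ j ∈ range e, τ j ^ (idx (Fin.cons k g : Fin (e + 1) → ℕ) (j + 1) -
            idx (Fin.cons k g : Fin (e + 1) → ℕ) (j + 2))) *
          b (idx (Fin.cons k g : Fin (e + 1) → ℕ) (e + 1))) := by
  induction e generalizing σ τ k with
  | zero => rw [sum_chainsIcc_zero]; simp [nestedSum, idx]
  | succ e ih =>
    rw [nestedSum, geomConv, sum_chainsIcc_succ]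
    refine sum_congr rfl fun m _ => ?_
    rw [divByIndex_iterate_apply, ih, smul_sum, mul_sum]
    refine sum_congr rfl fun g _ => ?_
    simp only [prod_range_succ', idx_cons_one, idx_cons_add_two, zero_add]
    rw [mul_smul_comm, mul_smul_comm, smul_smul, mul_inv, mul_comm ((m : ℚ) ^ σ 0)⁻¹]
    congr 1
    ring

end NestedSum

section BlockWeight
variable {A : Type*} [CommRing A]

def blockWeight (σ : ℕ → ℕ) (τ : ℕ → A) (e j : ℕ) : A :=
  ∏ r ∈ range e, if j = lsum σ r then 1 - τ r else 1

lemma blockWeight_succ (σ : ℕ → ℕ) (τ : ℕ → A) (e j : ℕ) :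
    blockWeight σ τ (e + 1) j = (if j = 0 then 1 - τ 0 else 1) *
      ∏ r ∈ range e, if j = σ 0 + lsum (fun i => σ (i + 1)) r then 1 - τ (r + 1) else 1 := by
  simp only [blockWeight, prod_range_succ', lsum_succ, mul_comm]
  rfl

lemma blockWeight_succ_add (σ : ℕ → ℕ) (τ : ℕ → A) (e j : ℕ) (hσ : 1 ≤ σ 0) :
    blockWeight σ τ (e + 1) (σ 0 + j) =
      blockWeight (fun i => σ (i + 1)) (fun i => τ (i + 1)) e j := by
  rw [blockWeight_succ, if_neg (by omega), one_mul, blockWeight]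
  simp only [Nat.add_left_cancel_iff]

lemma blockWeight_succ_of_lt (σ : ℕ → ℕ) (τ : ℕ → A) (e : ℕ) {j : ℕ} (hj : j < σ 0) :
    blockWeight σ τ (e + 1) j = if j = 0 then 1 - τ 0 else 1 := by
  rw [blockWeight_succ, prod_eq_one fun r _ => if_neg (by omega), mul_one]

lemma prod_blockWeight_pow (σ : ℕ → ℕ) (τ : ℕ → A) (e w : ℕ) (F : ℕ → ℕ)
    (h : ∀ r < e, lsum σ r < w) :
    ∏ j ∈ range w, blockWeight σ τ e j ^ F j = ∏ r ∈ range e, (1 - τ r) ^ F (lsum σ r) := by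
  simp only [blockWeight, ← prod_pow]
  rw [prod_comm]
  refine prod_congr rfl fun r hr => ?_
  simp only [ite_pow, one_pow, prod_ite_eq', mem_range, if_pos (h r (mem_range.1 hr))]

end BlockWeight

section Collapse
variable {A : Type*} [CommRing A] [Algebra ℚ A]

theorem binomialTransform_nestedSum (τ : ℕ → A) (w : ℕ) (b : ℕ → A) :
    binomialTransform (nestedSum (fun _ => 1) τ w b) =
      nestedSum (fun _ => 1) (fun j => 1 - τ j) w (binomialTransform b) := by
  induction w generalizing τ with
  | zero => rfl
  | succ w ih =>
    simp only [nestedSum, Function.iterate_one]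
    rw [binomialTransform_geomConv_divByIndex, ih]

lemma nestedSum_of_eq_zero {τ : ℕ → A} {a : ℕ} (hτ : ∀ j < a, τ j = 0) (b : ℕ → A) :
    nestedSum (fun _ => 1) τ a b = divByIndex^[a] b := by
  induction a generalizing τ with
  | zero => rfl
  | succ a ih =>
    rw [nestedSum, Function.iterate_one, hτ 0 (by omega), ih fun j hj => hτ (j + 1) (by omega),
      geomConv_zero_of_apply_zero (by simp [divByIndex]), Function.iterate_succ_apply']

lemma nestedSum_prepend_zero {σ : ℕ → ℕ} (hσ : 1 ≤ σ 0) (t : ℕ → A) (e : ℕ) (b : ℕ → A) :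
    nestedSum σ (fun r => if r = 0 then 0 else t (r - 1)) (e + 1) b =
      divByIndex^[σ 0] (nestedSum (fun j => σ (j + 1)) t e b) := by
  rw [nestedSum, if_pos rfl]
  exact geomConv_zero_of_apply_zero (by
    simp [divByIndex_iterate_apply, Nat.one_le_iff_ne_zero.1 hσ])

theorem nestedSum_blockWeight (σ : ℕ → ℕ) (τ : ℕ → A) (e : ℕ) (hσ : ∀ r < e, 1 ≤ σ r)
    (b : ℕ → A) :
    nestedSum (fun _ => 1) (fun j => 1 - blockWeight σ τ e j) (lsum σ e) b = nestedSum σ τ e b := by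
  induction e generalizing σ τ with
  | zero => rfl
  | succ e ih =>
    obtain ⟨a, ha⟩ := Nat.exists_eq_add_of_le' (hσ 0 (by omega))
    rw [lsum_succ, nestedSum_add]
    simp only [blockWeight_succ_add σ τ e _ (hσ 0 (by omega))]
    rw [ih _ _ fun r hr => hσ (r + 1) (by omega), ha, nestedSum, Function.iterate_one,
      nestedSum_of_eq_zero, blockWeight_succ_of_lt σ τ e (by omega), if_pos rfl, sub_sub_cancel,
      ← Function.iterate_succ_apply' divByIndex, nestedSum, ha]
    intro j hj
    rw [blockWeight_succ_of_lt σ τ e (by omega), if_neg (by omega), sub_self]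

end Collapse

section Identity
variable {A : Type*} [CommRing A] [Algebra ℚ A]

lemma sum_chainsIcc_eq_binomialTransform (e : ℕ) (s : ℕ → ℕ) (t : ℕ → A) (n : ℕ) :
    ∑ m ∈ chainsIcc (e + 1) 1 n,
        (((-1 : ℚ) ^ (idx m 1) * (n.choose (idx m 1) : ℚ)) *
            (∏ j ∈ range (e + 1), (idx m (j + 1) : ℚ) ^ s j)⁻¹) •
          ((∏ j ∈ range e, t j ^ (idx m (j + 1) - idx m (j + 2))) * t e ^ (idx m (e + 1)))
      = binomialTransform
          (divByIndex^[s 0] (nestedSum (fun j => s (j + 1)) t e fun k => t e ^ k)) n := by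
  rw [sum_chainsIcc_succ, binomialTransform]
  refine sum_congr rfl fun k _ => ?_
  rw [divByIndex_iterate_apply, nestedSum_eq_sum, smul_sum, smul_sum]
  refine sum_congr rfl fun g _ => ?_
  rw [prod_range_succ', idx_cons_one, smul_smul, smul_smul, mul_inv, mul_comm _ ((k : ℚ) ^ s 0)⁻¹,
    ← mul_assoc]
  simp only [idx_cons_add_two]

lemma nestedSum_blockWeight_eq_sum (e : ℕ) (s : ℕ → ℕ) (t : ℕ → A) (n : ℕ)
    (hs : ∀ i < e + 1, 1 ≤ s i) :
    nestedSum (fun _ => 1) (blockWeight s (fun r => if r = 0 then 0 else t (r - 1)) (e + 1))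
        (lsum s (e + 1)) (fun k => (1 - t e) ^ k - 1) n
      = ∑ f ∈ chainsIcc (lsum s (e + 1)) 1 n,
          (∏ j ∈ range (lsum s (e + 1)), (idx f (j + 1) : ℚ))⁻¹ •
            ((∏ r ∈ range e,
                (1 - t r) ^ (idx f (lsum s (r + 1)) - idx f (lsum s (r + 1) + 1))) *
              ((1 - t e) ^ (idx f (lsum s (e + 1))) - 1)) := by
  have hpos : ∀ r, lsum s (r + 1) ≠ 0 := fun r => by rw [lsum_succ]; have := hs 0 (by omega); omega
  rw [nestedSum_eq_sum]
  refine sum_congr rfl fun f _ => ?_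
  rw [prod_blockWeight_pow _ _ _ _ _ fun r hr => lsum_lt_lsum hs hr, prod_range_succ',
    idx_cons_succ _ _ (hpos e)]
  simp only [pow_one, if_pos, sub_zero, one_pow, mul_one, Nat.add_sub_cancel, Nat.succ_ne_zero,
    if_false, idx_cons_add_two, idx_cons_succ _ _ (hpos _)]

end Identity

theorem sakugawa_seki_first_general {A : Type*} [CommRing A] [Algebra ℚ A]
    (d : ℕ) (hd : 1 ≤ d) (s : ℕ → ℕ) (hs : ∀ i < d, 1 ≤ s i)
    (t : ℕ → A) (n : ℕ) :
    ∑ m ∈ chainsIcc d 1 n,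
        (((-1 : ℚ) ^ (idx m 1) * (n.choose (idx m 1) : ℚ)) *
            (∏ j ∈ Finset.range d, (idx m (j + 1) : ℚ) ^ s j)⁻¹) •
          ((∏ j ∈ Finset.range (d - 1), t j ^ (idx m (j + 1) - idx m (j + 2))) *
            t (d - 1) ^ (idx m d))
      = ∑ f ∈ chainsIcc (lsum s d) 1 n,
          (∏ j ∈ Finset.range (lsum s d), (idx f (j + 1) : ℚ))⁻¹ •
            ((∏ r ∈ Finset.range (d - 1),
                (1 - t r) ^ (idx f (lsum s (r + 1)) - idx f (lsum s (r + 1) + 1))) *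
              ((1 - t (d - 1)) ^ (idx f (lsum s d)) - 1)) := by
  obtain ⟨e, rfl⟩ := Nat.exists_eq_add_of_le' hd
  rw [Nat.add_sub_cancel, sum_chainsIcc_eq_binomialTransform,
    ← nestedSum_prepend_zero (hs 0 (by omega)), ← nestedSum_blockWeight _ _ (e + 1) hs,
    binomialTransform_nestedSum, binomialTransform_pow, ← nestedSum_blockWeight_eq_sum e s t n hs]
  simp only [sub_sub_cancel]

theorem sakugawa_seki_first {A : Type*} [CommRing A] [Algebra ℚ A]
    (d : ℕ) (hd : 1 ≤ d) (s : ℕ → ℕ) (hs : ∀ i < d, 1 ≤ s i)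
    (t : ℕ → A) (n : ℕ) (hn : 1 ≤ n) :
    ∑ m ∈ chainsIcc d 1 n,
        (((-1 : ℚ) ^ (idx m 1) * (n.choose (idx m 1) : ℚ)) *
            (∏ j ∈ Finset.range d, (idx m (j + 1) : ℚ) ^ s j)⁻¹) •
          ((∏ j ∈ Finset.range (d - 1), t j ^ (idx m (j + 1) - idx m (j + 2))) *
            t (d - 1) ^ (idx m d))
      = ∑ f ∈ chainsIcc (lsum s d) 1 n,
          (∏ j ∈ Finset.range (lsum s d), (idx f (j + 1) : ℚ))⁻¹ •
            ((∏ r ∈ Finset.range (d - 1),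
                (1 - t r) ^ (idx f (lsum s (r + 1)) - idx f (lsum s (r + 1) + 1))) *
              ((1 - t (d - 1)) ^ (idx f (lsum s d)) - 1)) :=
  sakugawa_seki_first_general d hd s hs t n
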